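/- Let K be an algebraically closed field of characteristic zero and F ∈ K[y,z] irreducible. If y(x) ∈ K⟨⟨x⟩⟩ is a non-constant formal Puiseux series with F(y(x), y'(x)) = 0, and R ∈ K[y,z] satisfies deg(R,z) < deg(F,z) and R(y(x), y'(x)) = 0, then R is the zero polynomial. -/

import Mathlib

open Polynomial

/-- The formal derivative of a Hahn/Puiseux series: the coefficient of `x^q`
in `f'` is `(q+1) · (coefficient of `x^{q+1}` in `f`)`. -/
noncomputable def pDeriv {K : Type*} [Field K] [CharZero K] (f : HahnSeries ℚ K) :
    HahnSeries ℚ K where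
  coeff q := (q + 1 : ℚ) • f.coeff (q + 1)
  isPWO_support' := by
    have hsub : (Function.support fun q : ℚ => (q + 1 : ℚ) • f.coeff (q + 1)) ⊆
        (fun q : ℚ => q - 1) '' f.support := by
      intro q hq
      refine ⟨q + 1, ?_, by ring⟩
      intro h
      simp [Function.mem_support, h] at hq
    exact (f.isPWO_support.image_of_monotone
      (fun a b hab => by simpa using sub_le_sub_right hab 1)).mono hsub

/-- A Hahn series over `ℚ` is a (formal) Puiseux series if the exponents in its
support have a common denominator. -/
def IsPuiseux {K : Type*} [Field K] (f : HahnSeries ℚ K) : Prop :=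
  ∃ n : ℕ, 0 < n ∧ ∀ q ∈ f.support, ∃ m : ℤ, q = (m : ℚ) / n

/-!
Since `K` is algebraically closed and `y` is not constant, `y` is transcendental over `K`, so
`K[y] ⊆ K⟨⟨x⟩⟩` is a polynomial ring. Viewed as a polynomial in `z` over `K[y]`, the irreducible
`F` is primitive, hence by Gauss's lemma irreducible over `K(y)`; as it vanishes at `y'`, it
divides every polynomial over `K(y)` vanishing at `y'`. A nonzero `R` of smaller `z`-degree
cannot be such a multiple.
-/

theorem transcendental_of_forall_ne_algebraMap {k L : Type*} [Field k] [IsAlgClosed k]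
    [CommRing L] [IsDomain L] [Algebra k L] {x : L} (hx : ∀ c : k, x ≠ algebraMap k L c) :
    Transcendental k x := fun halg ↦ by
  obtain ⟨c, hc⟩ := minpoly.mem_range_of_degree_eq_one k x
    (IsAlgClosed.degree_eq_one_of_irreducible k (minpoly.irreducible halg.isIntegral))
  exact hx c hc.symm

theorem Polynomial.eq_zero_of_aeval_eq_zero_of_natDegree_lt {A K L : Type*} [CommRing A]
    [IsDomain A] [IsGCDMonoid A] [Field K] [Algebra A K] [IsFractionRing A K] [CommRing L]
    [Nontrivial L] [Algebra A L] [Algebra K L] [IsScalarTower A K L] {f g : A[X]} {x : L}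
    (hf : Irreducible f) (hfx : aeval x f = 0) (hgx : aeval x g = 0)
    (hdeg : g.natDegree < f.natDegree) : g = 0 := by
  by_contra hg
  have hinj := IsFractionRing.injective A K
  have hfK : Irreducible (f.map (algebraMap A K)) :=
    (hf.isPrimitive (by omega)).irreducible_iff_irreducible_map_fraction_map.mp hf
  have hdvd : f.map (algebraMap A K) ∣ g.map (algebraMap A K) :=
    (hfK.dvd_iff_aeval_eq_zero ((aeval_map_algebraMap K x f).trans hfx)).mp
      ((aeval_map_algebraMap K x g).trans hgx)
  have := natDegree_le_of_dvd hdvd ((Polynomial.map_ne_zero_iff hinj).mpr hg)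
  rw [natDegree_map_eq_of_injective hinj, natDegree_map_eq_of_injective hinj] at this
  omega

namespace MvPolynomial

variable {k L ι : Type*} [Field k] [Field L] [Algebra k L] {a : ι → L} {i : ι}

theorem aeval_adjoin_image_compl_injective
    (H : AlgebraicIndependent k fun x : {j | j ≠ i} ↦ a x) :
    Function.Injective (aeval (R := k) fun j : {j // j ≠ i} ↦
      (⟨a j, Algebra.subset_adjoin ⟨j, j.2, rfl⟩⟩ : Algebra.adjoin k (a '' {i}ᶜ))) := by
  refine .of_comp (f := (Algebra.adjoin k (a '' {i}ᶜ)).val) ?_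
  rw [← AlgHom.coe_comp, comp_aeval]
  exact H

theorem toPolynomialAdjoinImageCompl_injective
    (H : AlgebraicIndependent k fun x : {j | j ≠ i} ↦ a x) :
    Function.Injective fun F : MvPolynomial ι k ↦ toPolynomialAdjoinImageCompl F a i :=
  (Polynomial.map_injective _ (aeval_adjoin_image_compl_injective H)).comp
    ((optionEquivLeft k _).injective.comp (renameEquiv k _).injective)

theorem natDegree_toPolynomialAdjoinImageCompl
    (H : AlgebraicIndependent k fun x : {j | j ≠ i} ↦ a x) (F : MvPolynomial ι k) :
    (toPolynomialAdjoinImageCompl F a i).natDegree = F.degreeOf i := by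
  classical
  rw [toPolynomialAdjoinImageCompl, Polynomial.coe_mapAlgHom]
  exact (Polynomial.natDegree_map_eq_of_injective (aeval_adjoin_image_compl_injective H) _).trans
    (degreeOf_eq_natDegree i F).symm

open scoped IntermediateField.algebraAdjoinAdjoin in
theorem eq_zero_of_aeval_eq_zero_of_degreeOf_lt
    (H : AlgebraicIndependent k fun x : {j | j ≠ i} ↦ a x) {F R : MvPolynomial ι k}
    (hF : Irreducible F) (hFa : aeval a F = 0) (hRa : aeval a R = 0)
    (hdeg : R.degreeOf i < F.degreeOf i) : R = 0 := by
  have : UniqueFactorizationMonoid (Algebra.adjoin k (a '' {i}ᶜ)) :=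
    (AlgebraicIndepOn.aevalEquiv (s := {i}ᶜ) H).uniqueFactorizationMonoid inferInstance
  suffices toPolynomialAdjoinImageCompl R a i = 0 from
    (toPolynomialAdjoinImageCompl_injective H).eq_iff' (by simp [toPolynomialAdjoinImageCompl])
      |>.mp this
  exact Polynomial.eq_zero_of_aeval_eq_zero_of_natDegree_lt
    (K := IntermediateField.adjoin k (a '' {i}ᶜ))
    (irreducible_toPolynomialAdjoinImageCompl hF i H)
    (aeval_toPolynomialAdjoinImageCompl_eq_zero hFa i)
    (aeval_toPolynomialAdjoinImageCompl_eq_zero hRa i)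
    (by rwa [natDegree_toPolynomialAdjoinImageCompl H, natDegree_toPolynomialAdjoinImageCompl H])

end MvPolynomial

theorem statement2_general {K : Type*} [Field K] [IsAlgClosed K] [CharZero K]
    (F R : MvPolynomial (Fin 2) K) (hF : Irreducible F)
    (y : HahnSeries ℚ K)
    (hync : ∀ c : K, y ≠ HahnSeries.C c)
    (hsol : MvPolynomial.aeval ![y, pDeriv y] F = 0)
    (hdegR : MvPolynomial.degreeOf 1 R < MvPolynomial.degreeOf 1 F)
    (hRzero : MvPolynomial.aeval ![y, pDeriv y] R = 0) :
    R = 0 := by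
  -- The `K`-algebra structure of `HahnSeries ℚ K` is the one through power series.
  have hy : Transcendental K y :=
    transcendental_of_forall_ne_algebraMap fun c ↦ by
      simpa [HahnSeries.algebraMap_apply'] using hync c
  have : Subsingleton {j | j ≠ (1 : Fin 2)} := ⟨by decide⟩
  exact MvPolynomial.eq_zero_of_aeval_eq_zero_of_degreeOf_lt
    ((algebraicIndependent_singleton_iff ⟨0, by decide⟩).mpr hy) hF hsol hRzero hdegR

theorem statement2 {K : Type*} [Field K] [IsAlgClosed K] [CharZero K]
    (F R : MvPolynomial (Fin 2) K) (hF : Irreducible F)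
    (y : HahnSeries ℚ K) (hy : IsPuiseux y)
    (hync : ∀ c : K, y ≠ HahnSeries.C c)
    (hsol : MvPolynomial.aeval ![y, pDeriv y] F = 0)
    (hdegR : MvPolynomial.degreeOf 1 R < MvPolynomial.degreeOf 1 F)
    (hRzero : MvPolynomial.aeval ![y, pDeriv y] R = 0) :
    R = 0 :=
  statement2_general F R hF y hync hsol hdegR hRzero
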